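/- Let h ∈ ℂ[[X,Y]] be a nonzero formal power series in two variables. Then there exist a point p ∈ ℕ² and a finite (possibly empty) list of pairs of positive integers (a₁,b₁), …, (a_k,b_k) such that the Newton diagram of h equals the Minkowski sum {p} + Teis(a₁,b₁) + ⋯ + Teis(a_k,b_k). -/

import Mathlib

open Pointwise

/-- The closed first quadrant `ℝ₊² = [0,∞)²` of `ℝ²`. -/
def firstQuadrant : Set (ℝ × ℝ) := {p | 0 ≤ p.1 ∧ 0 ≤ p.2}

/-- The Newton diagram of a set `S ⊆ ℝ²`: the convex hull of the union of the
translates `s + ℝ₊²` over `s ∈ S`. -/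
noncomputable def newtonDiagram (S : Set (ℝ × ℝ)) : Set (ℝ × ℝ) :=
  convexHull ℝ (⋃ s ∈ S, (fun q => s + q) '' firstQuadrant)

/-- The elementary Newton diagram `Teis(a,b) = conv{(0,b),(a,0)} + ℝ₊²`. -/
noncomputable def Teis (a b : ℕ) : Set (ℝ × ℝ) :=
  convexHull ℝ {((0 : ℝ), (b : ℝ)), ((a : ℝ), (0 : ℝ))} + firstQuadrant

/-- The support of a two-variable formal power series, viewed as a subset of `ℝ²`. -/
def powerSeriesSupport (h : MvPowerSeries (Fin 2) ℂ) : Set (ℝ × ℝ) :=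
  {p | ∃ d : Fin 2 →₀ ℕ, MvPowerSeries.coeff d h ≠ 0 ∧ p = ((d 0 : ℝ), (d 1 : ℝ))}

/-- The Newton diagram of a formal power series `h ∈ ℂ[[X,Y]]`. -/
noncomputable def newtonDiagramOf (h : MvPowerSeries (Fin 2) ℂ) : Set (ℝ × ℝ) :=
  newtonDiagram (powerSeriesSupport h)

/-!
Only the minimal points of the support matter, and by Dickson's lemma there are finitely many;
so it suffices to treat a finite nonempty `M ⊆ ℕ²`, by induction on its size. A point of `M`
lying in the Newton diagram of the others can be dropped. Otherwise let `v` be the rightmost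
point of `M` and `w` the rightmost of the others: `[w, v]` is the last compact edge of the
Newton polygon, so the other points lie on or above the line `wv`, and
`Δ(M) = Δ((M \ {v}) + {0, v - w})`. Writing `v - w = (a, -b)`, this is
`Δ((M \ {v}) - (0, b)) + Teis(a, b)`, and `(M \ {v}) - (0, b)` still lies in `ℕ²`.
-/

theorem firstQuadrant_eq_Ici : firstQuadrant = Set.Ici 0 := by
  ext; simp [firstQuadrant, Prod.le_def]

theorem firstQuadrant_add_firstQuadrant : firstQuadrant + firstQuadrant = firstQuadrant := by
  rw [firstQuadrant_eq_Ici]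
  refine ((Set.Ici_add_Ici_subset 0 0).trans (by simp)).antisymm ?_
  exact Set.subset_add_left _ Set.self_mem_Ici

section NewtonDiagram

variable {S T : Set (ℝ × ℝ)}

theorem newtonDiagram_eq_convexHull_add (S : Set (ℝ × ℝ)) :
    newtonDiagram S = convexHull ℝ S + firstQuadrant := by
  rw [newtonDiagram, Set.iUnion_add_left_image, convexHull_add, firstQuadrant_eq_Ici,
    (convex_Ici 0).convexHull_eq]

theorem convex_newtonDiagram (S : Set (ℝ × ℝ)) : Convex ℝ (newtonDiagram S) :=
  convex_convexHull ℝ _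

theorem newtonDiagram_add_firstQuadrant (S : Set (ℝ × ℝ)) :
    newtonDiagram S + firstQuadrant = newtonDiagram S := by
  rw [newtonDiagram_eq_convexHull_add, add_assoc, firstQuadrant_add_firstQuadrant]

theorem newtonDiagram_mono (h : S ⊆ T) : newtonDiagram S ⊆ newtonDiagram T :=
  convexHull_mono (Set.biUnion_subset_biUnion_left h)

theorem mem_newtonDiagram_of_mem_convexHull_of_le {s x : ℝ × ℝ} (hs : s ∈ convexHull ℝ S)
    (h : s ≤ x) : x ∈ newtonDiagram S := by
  rw [newtonDiagram_eq_convexHull_add, firstQuadrant_eq_Ici]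
  exact ⟨s, hs, x - s, sub_nonneg.2 h, add_sub_cancel s x⟩

theorem mem_newtonDiagram_of_le {s x : ℝ × ℝ} (hs : s ∈ S) (h : s ≤ x) :
    x ∈ newtonDiagram S :=
  mem_newtonDiagram_of_mem_convexHull_of_le (subset_convexHull ℝ S hs) h

theorem subset_newtonDiagram (S : Set (ℝ × ℝ)) : S ⊆ newtonDiagram S :=
  fun _ hs ↦ mem_newtonDiagram_of_le hs le_rfl

theorem newtonDiagram_subset_iff :
    newtonDiagram S ⊆ newtonDiagram T ↔ S ⊆ newtonDiagram T := by
  refine ⟨(subset_newtonDiagram S).trans, fun h ↦ ?_⟩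
  rw [newtonDiagram_eq_convexHull_add S, ← newtonDiagram_add_firstQuadrant T]
  exact Set.add_subset_add_right (convexHull_min h (convex_newtonDiagram T))

theorem newtonDiagram_insert_of_mem {v : ℝ × ℝ} (hv : v ∈ newtonDiagram S) :
    newtonDiagram (insert v S) = newtonDiagram S :=
  (newtonDiagram_subset_iff.2 (Set.insert_subset hv (subset_newtonDiagram S))).antisymm
    (newtonDiagram_mono (Set.subset_insert v S))

theorem newtonDiagram_add (S T : Set (ℝ × ℝ)) :
    newtonDiagram (S + T) = newtonDiagram S + newtonDiagram T := by
  simp only [newtonDiagram_eq_convexHull_add, convexHull_add]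
  rw [add_add_add_comm, firstQuadrant_add_firstQuadrant]

theorem Teis_eq_newtonDiagram (a b : ℕ) :
    Teis a b = newtonDiagram {((0 : ℝ), (b : ℝ)), ((a : ℝ), (0 : ℝ))} :=
  (newtonDiagram_eq_convexHull_add _).symm

theorem mem_newtonDiagram_pair_of_above {u v x : ℝ × ℝ} (hux : u.1 ≤ x.1) (hxv : x.1 ≤ v.1)
    (huv : u.1 < v.1) (habove : (x.1 - u.1) * (v.2 - u.2) ≤ (x.2 - u.2) * (v.1 - u.1)) :
    x ∈ newtonDiagram {u, v} := by
  set t := (x.1 - u.1) / (v.1 - u.1)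
  have hvu : 0 < v.1 - u.1 := sub_pos.2 huv
  have ht₀ : 0 ≤ t := div_nonneg (sub_nonneg.2 hux) hvu.le
  have ht₁ : t ≤ 1 := (div_le_one hvu).2 (by linarith)
  have hz : (1 - t) • u + t • v ∈ convexHull ℝ {u, v} :=
    convex_convexHull ℝ _ (subset_convexHull ℝ _ (by simp)) (subset_convexHull ℝ _ (by simp))
      (sub_nonneg.2 ht₁) ht₀ (sub_add_cancel 1 t)
  have hzx : (1 - t) • u + t • v ≤ x := by
    have hx₁ : t * (v.1 - u.1) = x.1 - u.1 := div_mul_cancel₀ _ hvu.ne'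
    have hx₂ : t * (v.2 - u.2) ≤ x.2 - u.2 := by
      rw [div_mul_eq_mul_div, div_le_iff₀ hvu]; exact habove
    constructor <;> simp only [Prod.fst_add, Prod.snd_add, Prod.smul_fst, Prod.smul_snd,
      smul_eq_mul] <;> linarith
  exact mem_newtonDiagram_of_mem_convexHull_of_le hz hzx

theorem newtonDiagram_insert_eq_add_pair {v w : ℝ × ℝ} (hw : w ∈ S) (hwv : w.1 < v.1)
    (hS : ∀ u ∈ S, u.1 ≤ w.1 ∧ (w.2 - v.2) * (v.1 - u.1) ≤ (v.1 - w.1) * (u.2 - v.2)) :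
    newtonDiagram (insert v S) = newtonDiagram (S + {0, v - w}) := by
  apply Set.Subset.antisymm
  · rw [newtonDiagram_subset_iff, Set.insert_subset_iff]
    refine ⟨?_, fun u hu ↦ ?_⟩
    · have : w + (v - w) ∈ S + {0, v - w} := Set.add_mem_add hw (by simp)
      simpa using subset_newtonDiagram _ this
    · have : u + 0 ∈ S + {0, v - w} := Set.add_mem_add hu (by simp)
      simpa using subset_newtonDiagram _ this
  · rw [newtonDiagram_subset_iff]
    rintro _ ⟨u, hu, d, hd, rfl⟩
    rcases hd with rfl | rfl
    · simpa using subset_newtonDiagram _ (Set.mem_insert_of_mem v hu)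
    · obtain ⟨huw, hline⟩ := hS u hu
      have hpair : {u, v} ⊆ insert v S :=
        Set.insert_subset (Set.mem_insert_of_mem v hu) (by simp)
      refine newtonDiagram_mono hpair
        (mem_newtonDiagram_pair_of_above ?_ ?_ (huw.trans_lt hwv) ?_) <;>
      simp only [Prod.fst_add, Prod.snd_add, Prod.fst_sub, Prod.snd_sub] <;> linarith
end NewtonDiagram

def natPoint (n : ℕ × ℕ) : ℝ × ℝ := ((n.1 : ℝ), (n.2 : ℝ))

theorem natPoint_le_natPoint {m n : ℕ × ℕ} : natPoint m ≤ natPoint n ↔ m ≤ n := by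
  simp [natPoint, Prod.le_def]

theorem natPoint_image_translate {M : Finset (ℕ × ℕ)} {b : ℕ} (h : ∀ u ∈ M, b ≤ u.2) :
    natPoint '' ↑(M.image fun u ↦ (u.1, u.2 - b)) = natPoint '' ↑M + {(0, -(b : ℝ))} := by
  rw [Finset.coe_image, Set.image_image, Set.add_singleton, Set.image_image]
  refine Set.image_congr fun u hu ↦ ?_
  simp [natPoint, Nat.cast_sub (h u hu), sub_eq_add_neg]

theorem newtonDiagram_insert_natPoint_eq_add_Teis {S : Set (ℝ × ℝ)} {v w : ℕ × ℕ}
    (hw : natPoint w ∈ S) (hwv : w.1 < v.1) (hvw : v.2 ≤ w.2)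
    (hS : ∀ u ∈ S, u.1 ≤ w.1 ∧
      ((w.2 : ℝ) - v.2) * (v.1 - u.1) ≤ (v.1 - w.1) * (u.2 - v.2)) :
    newtonDiagram (insert (natPoint v) S) =
      newtonDiagram (S + {(0, -((w.2 - v.2 : ℕ) : ℝ))}) + Teis (v.1 - w.1) (w.2 - v.2) := by
  have hpair : ({0, natPoint v - natPoint w} : Set (ℝ × ℝ)) =
      {(0, -((w.2 - v.2 : ℕ) : ℝ))} +
        {((0 : ℝ), ((w.2 - v.2 : ℕ) : ℝ)), (((v.1 - w.1 : ℕ) : ℝ), (0 : ℝ))} := by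
    rw [Set.singleton_add, Set.image_pair, Nat.cast_sub hwv.le, Nat.cast_sub hvw]
    simp [natPoint, Prod.zero_eq_mk]
  rw [newtonDiagram_insert_eq_add_pair (v := natPoint v) hw (Nat.cast_lt.2 hwv) hS, hpair,
    ← add_assoc, newtonDiagram_add, Teis_eq_newtonDiagram]

def HasTeisDecomposition (D : Set (ℝ × ℝ)) : Prop :=
  ∃ (p : ℕ × ℕ) (k : ℕ) (a b : Fin k → ℕ), (∀ i, 0 < a i) ∧ (∀ i, 0 < b i) ∧
    D = {natPoint p} + firstQuadrant + ∑ i : Fin k, Teis (a i) (b i)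

theorem hasTeisDecomposition_newtonDiagram_singleton (p : ℕ × ℕ) :
    HasTeisDecomposition (newtonDiagram {natPoint p}) :=
  ⟨p, 0, Fin.elim0, Fin.elim0, fun i ↦ i.elim0, fun i ↦ i.elim0, by
    simp [newtonDiagram_eq_convexHull_add]⟩

theorem HasTeisDecomposition.add_Teis {D : Set (ℝ × ℝ)} (hD : HasTeisDecomposition D)
    {a b : ℕ} (ha : 0 < a) (hb : 0 < b) : HasTeisDecomposition (D + Teis a b) := by
  obtain ⟨p, k, a', b', ha', hb', rfl⟩ := hD
  refine ⟨p, k + 1, Fin.snoc a' a, Fin.snoc b' b, fun i ↦ ?_, fun i ↦ ?_, ?_⟩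
  · induction i using Fin.lastCases <;> simp [ha, ha']
  · induction i using Fin.lastCases <;> simp [hb, hb']
  · rw [Fin.sum_univ_castSucc]
    simp [add_assoc]

theorem exists_rightmost_edge {M : Finset (ℕ × ℕ)} (hM : 1 < M.card)
    (hirr : ∀ v ∈ M, natPoint v ∉ newtonDiagram (natPoint '' ↑(M.erase v))) :
    ∃ v ∈ M, ∃ w ∈ M.erase v, w.1 < v.1 ∧ v.2 < w.2 ∧
      ∀ u ∈ M.erase v, u.1 ≤ w.1 ∧ w.2 ≤ u.2 ∧
        ((w.2 : ℝ) - v.2) * (v.1 - u.1) ≤ (v.1 - w.1) * (u.2 - v.2) := by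
  have hanti : ∀ u ∈ M, ∀ z ∈ M, u ≤ z → u = z := by
    intro u hu z hz huz
    by_contra hne
    exact hirr z hz (mem_newtonDiagram_of_le ⟨u, Finset.mem_erase.2 ⟨hne, hu⟩, rfl⟩
      (natPoint_le_natPoint.2 huz))
  obtain ⟨v, hv, hvmax⟩ := M.exists_max_image Prod.fst (Finset.card_pos.1 (by omega))
  obtain ⟨w, hw, hwmax⟩ := (M.erase v).exists_max_image Prod.fst
    (Finset.card_pos.1 (by rw [Finset.card_erase_of_mem hv]; omega))
  obtain ⟨hwv, hwM⟩ := Finset.mem_erase.1 hw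
  have hvw₂ : v.2 < w.2 := by
    by_contra! h
    exact hwv (hanti w hwM v hv ⟨hvmax w hwM, h⟩)
  have hwv₁ : w.1 < v.1 :=
    (hvmax w hwM).lt_of_ne fun h ↦ hwv (hanti v hv w hwM ⟨h.ge, hvw₂.le⟩).symm
  refine ⟨v, hv, w, hw, hwv₁, hvw₂, fun u hu ↦ ?_⟩
  have huM := Finset.mem_of_mem_erase hu
  have hu₁ := hwmax u hu
  have hu₂ : w.2 ≤ u.2 := by
    by_contra! h
    obtain rfl := hanti u huM w hwM ⟨hu₁, h.le⟩
    exact lt_irrefl _ h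
  refine ⟨hu₁, hu₂, ?_⟩
  -- otherwise `w` would lie above the segment from `u` to `v`
  by_contra! hbelow
  have huw : u ≠ w := by
    rintro rfl
    linarith
  apply hirr w hwM
  have hsub : {natPoint u, natPoint v} ⊆ natPoint '' ↑(M.erase w) := by
    simp only [Set.insert_subset_iff, Set.singleton_subset_iff]
    exact ⟨⟨u, by simpa using ⟨huM, huw⟩, rfl⟩,
      ⟨v, by simpa using ⟨hv, hwv.symm⟩, rfl⟩⟩
  have hu₁' : (u.1 : ℝ) ≤ w.1 := Nat.cast_le.2 hu₁
  have hwv₁' : (w.1 : ℝ) < v.1 := Nat.cast_lt.2 hwv₁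
  refine newtonDiagram_mono hsub (mem_newtonDiagram_pair_of_above hu₁' hwv₁'.le
    (hu₁'.trans_lt hwv₁') ?_)
  simp only [natPoint]
  linarith

theorem hasTeisDecomposition_newtonDiagram_finset (M : Finset (ℕ × ℕ)) (hM : M.Nonempty) :
    HasTeisDecomposition (newtonDiagram (natPoint '' M)) := by
  induction hn : M.card using Nat.strong_induction_on generalizing M with
  | _ n ih =>
  by_cases hred : ∃ v ∈ M, natPoint v ∈ newtonDiagram (natPoint '' ↑(M.erase v))
  · obtain ⟨v, hv, hmem⟩ := hred
    have hne : (M.erase v).Nonempty := by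
      by_contra! h
      simp [h, newtonDiagram] at hmem
    rw [← Finset.insert_erase hv, Finset.coe_insert, Set.image_insert_eq,
      newtonDiagram_insert_of_mem hmem]
    exact ih _ (hn ▸ Finset.card_erase_lt_of_mem hv) _ hne rfl
  push Not at hred
  obtain hM₁ | hM₁ := eq_or_lt_of_le (Finset.one_le_card.2 hM)
  · obtain ⟨m, rfl⟩ := Finset.card_eq_one.1 hM₁.symm
    simpa using hasTeisDecomposition_newtonDiagram_singleton m
  obtain ⟨v, hv, w, hw, hwv, hvw, hedge⟩ := exists_rightmost_edge hM₁ hred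
  set M' := (M.erase v).image fun u ↦ (u.1, u.2 - (w.2 - v.2))
  have hM' : natPoint '' ↑M' = natPoint '' ↑(M.erase v) + {(0, -((w.2 - v.2 : ℕ) : ℝ))} :=
    natPoint_image_translate fun u hu ↦ (hedge u hu).2.1.trans' (Nat.sub_le _ _)
  have hS : ∀ x ∈ natPoint '' ↑(M.erase v), x.1 ≤ w.1 ∧
      ((w.2 : ℝ) - v.2) * (v.1 - x.1) ≤ (v.1 - w.1) * (x.2 - v.2) := by
    rintro _ ⟨u, hu, rfl⟩
    exact ⟨Nat.cast_le.2 (hedge u hu).1, (hedge u hu).2.2⟩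
  rw [← Finset.insert_erase hv, Finset.coe_insert, Set.image_insert_eq,
    newtonDiagram_insert_natPoint_eq_add_Teis (Set.mem_image_of_mem natPoint hw) hwv hvw.le hS,
    ← hM']
  have hcard : M'.card < n :=
    hn ▸ Finset.card_image_le.trans_lt (Finset.card_erase_lt_of_mem hv)
  exact (ih _ hcard M' (Finset.image_nonempty.2 ⟨w, hw⟩) rfl).add_Teis
    (by omega) (by omega)

theorem exists_finset_newtonDiagram_eq {T : Set (ℕ × ℕ)} (hT : T.Nonempty) :
    ∃ M : Finset (ℕ × ℕ), M.Nonempty ∧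
      newtonDiagram (natPoint '' T) = newtonDiagram (natPoint '' M) := by
  have hfin : {m | Minimal (· ∈ T) m}.Finite :=
    WellQuasiOrderedLE.finite_of_isAntichain (setOfPred_minimal_antichain _)
  have hmin : ∀ t ∈ T, ∃ m ∈ hfin.toFinset, m ≤ t := fun t ht ↦ by
    obtain ⟨m, hmt, hm⟩ := exists_minimal_le_of_wellFoundedLT _ t ht
    exact ⟨m, by simpa using hm, hmt⟩
  obtain ⟨t, ht⟩ := hT
  refine ⟨hfin.toFinset, (hmin t ht).imp fun _ ↦ And.left, ?_⟩
  refine (newtonDiagram_subset_iff.2 ?_).antisymm (newtonDiagram_mono (Set.image_mono ?_))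
  · rintro _ ⟨t, ht, rfl⟩
    obtain ⟨m, hm, hmt⟩ := hmin t ht
    exact mem_newtonDiagram_of_le ⟨m, hm, rfl⟩ (natPoint_le_natPoint.2 hmt)
  · intro m hm
    exact (by simpa using hm : Minimal (· ∈ T) m).prop

theorem powerSeriesSupport_eq_image (h : MvPowerSeries (Fin 2) ℂ) :
    powerSeriesSupport h =
      natPoint ''
        ((fun d : Fin 2 →₀ ℕ ↦ (d 0, d 1)) '' {d | MvPowerSeries.coeff d h ≠ 0}) := by
  ext
  simp [powerSeriesSupport, natPoint, eq_comm]

/-- The Newton diagram of a nonzero `h ∈ ℂ[[X,Y]]` decomposes as a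
Minkowski sum of a point of `ℕ²` and finitely many elementary Newton diagrams.
(The empty Minkowski sum of Newton diagrams is `ℝ₊²`, the neutral element of the
semigroup of Newton diagrams; since `Teis a b + ℝ₊² = Teis a b`, including the
summand `ℝ₊²` is harmless when the list is nonempty.) -/
theorem newtonDiagram_eq_sum_Teis (h : MvPowerSeries (Fin 2) ℂ) (h0 : h ≠ 0) :
    ∃ (p : ℕ × ℕ) (k : ℕ) (a b : Fin k → ℕ), (∀ i, 0 < a i) ∧ (∀ i, 0 < b i) ∧
      newtonDiagramOf h =
        {(((p.1 : ℝ), (p.2 : ℝ)) : ℝ × ℝ)} + firstQuadrant +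
          ∑ i : Fin k, Teis (a i) (b i) := by
  have hsupp :
      ((fun d : Fin 2 →₀ ℕ ↦ (d 0, d 1)) '' {d | MvPowerSeries.coeff d h ≠ 0}).Nonempty :=
    Set.Nonempty.image _ ((MvPowerSeries.ne_zero_iff_exists_coeff_ne_zero h).1 h0)
  obtain ⟨M, hM, hMeq⟩ := exists_finset_newtonDiagram_eq hsupp
  rw [newtonDiagramOf, powerSeriesSupport_eq_image, hMeq]
  exact hasTeisDecomposition_newtonDiagram_finset M hM
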